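/- Let V₀ be a free ℤ[r]-module with basis {x_β : β ∈ Φ⁺} and τ_k defined by τ_k(x_β) = 0, r·x_{β−α_k}, x_β, or (1−r²)x_β + r·x_{β+α_k} according as (α_k,β) = 2, 1, 0, −1. Then for adjacent k, l (i.e., (α_k,α_l) = −1), the braid relation τ_k τ_l τ_k = τ_l τ_k τ_l holds. -/
import Mathlib


/-- The fundamental root `α_i`, written in coordinates with respect to the basis of
fundamental roots. -/
def esingle {n : ℕ} (i : Fin n) : Fin n → ℤ := Pi.single i 1

/-- A finite crystallographic simply-laced root system (type `A`, `D` or `E`),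
given by the Gram matrix `C` of the fundamental roots `α_1, …, α_n` (all of squared
length 2):  `C i j = (α_i, α_j)`, which is `2` on the diagonal and `0` or `-1` off
the diagonal, and is positive definite.  Roots are coordinatized in the root
lattice `ℤⁿ`; the inner product is `ip`, and the positive roots are exactly the
lattice vectors of squared length `2` with nonnegative coordinates. -/
structure ADE (n : ℕ) where
  C : Matrix (Fin n) (Fin n) ℤ
  symm : ∀ i j, C i j = C j i
  diag : ∀ i, C i i = 2
  offdiag : ∀ i j, i ≠ j → C i j = 0 ∨ C i j = -1
  posdef : ∀ v : Fin n → ℤ, v ≠ 0 → 0 < ∑ i, ∑ j, v i * C i j * v j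

namespace ADE

variable {n : ℕ}

/-- The inner product `( , )` on the root lattice. -/
def ip (X : ADE n) (v w : Fin n → ℤ) : ℤ := ∑ i, ∑ j, v i * X.C i j * w j

/-- The set `Φ⁺` of positive roots: the lattice vectors of squared length `2`
all of whose coordinates (with respect to the fundamental roots) are nonnegative. -/
def Pos (X : ADE n) : Set (Fin n → ℤ) :=
  {β | β ≠ 0 ∧ (∀ j, 0 ≤ β j) ∧ X.ip β β = 2}

/-- The height `ht(β)`: the sum of the coefficients of `β` with respect to the
fundamental roots. -/
def htZ (β : Fin n → ℤ) : ℤ := ∑ j, β j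

end ADE

namespace ADE

variable {n : ℕ}

/-- The index type of the basis `{x_β : β ∈ Φ⁺}`. -/
abbrev PosIdx (X : ADE n) := {β : Fin n → ℤ // β ∈ X.Pos}

/-- The free module with basis `{x_β : β ∈ Φ⁺}` over a coefficient ring `A`. -/
abbrev LKMod (X : ADE n) (A : Type) [CommRing A] := ADE.PosIdx X →₀ A

/-- The basis vector `x_β`. -/
noncomputable def xv (X : ADE n) (A : Type) [CommRing A] (b : ADE.PosIdx X) :
    ADE.LKMod X A := Finsupp.single b 1

open scoped Classical in
/-- The linear map `τ_k` over a coefficient ring `A` with distinguished element `r`: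
`τ_k x_β = 0`, `r x_{β-α_k}`, `x_β`, or `(1 - r²) x_β + r x_{β+α_k}` according as
`(α_k, β) = 2, 1, 0, -1`. -/
noncomputable def tau (X : ADE n) (A : Type) [CommRing A] (r : A) (k : Fin n) :
    ADE.LKMod X A →ₗ[A] ADE.LKMod X A :=
  Finsupp.linearCombination A fun b : ADE.PosIdx X =>
    if X.ip (esingle k) b.1 = 2 then 0
    else if X.ip (esingle k) b.1 = 1 then
      (if h : b.1 - esingle k ∈ X.Pos then r • Finsupp.single ⟨b.1 - esingle k, h⟩ 1 else 0)
    else if X.ip (esingle k) b.1 = 0 then Finsupp.single b 1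
    else (1 - r ^ 2) • Finsupp.single b 1 +
      (if h : b.1 + esingle k ∈ X.Pos then r • Finsupp.single ⟨b.1 + esingle k, h⟩ 1 else 0)

end ADE

namespace ADE

variable {n : ℕ} (X : ADE n)

lemma ip_add_right (u v w : Fin n → ℤ) : X.ip u (v + w) = X.ip u v + X.ip u w := by
  simp [ip, mul_add, Finset.sum_add_distrib]

lemma ip_sub_right (u v w : Fin n → ℤ) : X.ip u (v - w) = X.ip u v - X.ip u w := by
  simp [ip, mul_sub, Finset.sum_sub_distrib]

lemma ip_symm (u v : Fin n → ℤ) : X.ip u v = X.ip v u := by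
  unfold ip
  rw [Finset.sum_comm]
  refine Finset.sum_congr rfl fun i _ => Finset.sum_congr rfl fun j _ => ?_
  rw [X.symm]; ring

lemma ip_add_left (u v w : Fin n → ℤ) : X.ip (u + v) w = X.ip u w + X.ip v w := by
  rw [ip_symm, ip_add_right, ip_symm X w u, ip_symm X w v]

lemma ip_sub_left (u v w : Fin n → ℤ) : X.ip (u - v) w = X.ip u w - X.ip v w := by
  rw [ip_symm, ip_sub_right, ip_symm X w u, ip_symm X w v]

lemma ip_smul_left (c : ℤ) (u v : Fin n → ℤ) : X.ip (c • u) v = c * X.ip u v := by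
  simp [ip, Finset.mul_sum, mul_assoc]

lemma ip_smul_right (c : ℤ) (u v : Fin n → ℤ) : X.ip u (c • v) = c * X.ip u v := by
  rw [ip_symm, ip_smul_left, ip_symm]

lemma ip_e_apply (i : Fin n) (v : Fin n → ℤ) : X.ip (esingle i) v = ∑ j, X.C i j * v j := by
  simp [ip, esingle, Pi.single_apply, ite_mul, Finset.sum_ite_eq]

lemma ip_ee (i j : Fin n) : X.ip (esingle i) (esingle j) = X.C i j := by
  rw [ip_e_apply]
  simp [esingle, Pi.single_apply, mul_ite, Finset.sum_ite_eq]

end ADE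

namespace ADE

variable {n : ℕ} (X : ADE n)

lemma eq_zero_of_ip_self_eq_zero {v : Fin n → ℤ} (hv : X.ip v v = 0) : v = 0 := by
  by_contra h
  exact absurd hv (ne_of_gt (X.posdef v h))

lemma ip_single_symm (v : Fin n → ℤ) (i : Fin n) :
    X.ip v (esingle i) = X.ip (esingle i) v := X.ip_symm v (esingle i)

lemma esingle_self (k : Fin n) : esingle k k = 1 := by simp [esingle]

lemma esingle_apply (k j : Fin n) : esingle k j = if j = k then 1 else 0 := by
  simp [esingle, Pi.single_apply]

lemma pairing_cases {β : Fin n → ℤ} (hβ : β ∈ X.Pos) (k : Fin n) :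
    X.ip (esingle k) β = -1 ∨ X.ip (esingle k) β = 0 ∨ X.ip (esingle k) β = 1 ∨
      (X.ip (esingle k) β = 2 ∧ β = esingle k) := by
  obtain ⟨hne, hnn, hnorm⟩ := hβ
  by_cases hv : (2:ℤ) • β - (X.ip (esingle k) β) • esingle k = 0
  · right; right; right
    have hk := congrFun hv k
    simp only [Pi.sub_apply, Pi.smul_apply, smul_eq_mul, Pi.zero_apply,
      esingle_self, mul_one] at hk
    have hβeq : β = (β k) • esingle k := by
      funext j
      have hj := congrFun hv j
      rcases eq_or_ne j k with rfl | hjk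
      · simp [esingle_self]
      · simp only [Pi.sub_apply, Pi.smul_apply, smul_eq_mul, Pi.zero_apply,
          esingle_apply, if_neg hjk, mul_zero, Pi.smul_apply] at hj ⊢
        omega
    have h2 : (2:ℤ) = β k * β k * 2 := by
      conv_lhs => rw [← hnorm]
      conv_lhs => rw [hβeq]
      rw [ip_smul_left, ip_smul_right, ip_ee, X.diag]
      ring
    have hk1 : β k = 1 := by nlinarith [hnn k]
    rw [hk1, one_smul] at hβeq
    constructor
    · rw [hβeq, ip_ee, X.diag]
    · exact hβeq
  · have hpos := X.posdef _ hv
    have hexp : X.ip ((2:ℤ) • β - (X.ip (esingle k) β) • esingle k)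
        ((2:ℤ) • β - (X.ip (esingle k) β) • esingle k)
        = 8 - 2 * (X.ip (esingle k) β) ^ 2 := by
      simp only [ip_sub_left, ip_sub_right, ip_smul_left, ip_smul_right, ip_ee]
      simp only [ip_single_symm, X.diag, hnorm]
      ring
    have hlt : (0:ℤ) < 8 - 2 * (X.ip (esingle k) β) ^ 2 := by rw [← hexp]; exact hpos
    have h1 : -1 ≤ X.ip (esingle k) β := by nlinarith
    have h2 : X.ip (esingle k) β ≤ 1 := by nlinarith
    omega

lemma coord_pos {β : Fin n → ℤ} (hβ : β ∈ X.Pos) {k : Fin n}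
    (h : X.ip (esingle k) β = 1) : 1 ≤ β k := by
  obtain ⟨hne, hnn, hnorm⟩ := hβ
  rw [ip_e_apply] at h
  rw [← Finset.add_sum_erase _ _ (Finset.mem_univ k)] at h
  have hterm : ∑ j ∈ Finset.univ.erase k, X.C k j * β j ≤ 0 := by
    refine Finset.sum_nonpos fun j hj => ?_
    have hjk : j ≠ k := (Finset.mem_erase.mp hj).1
    rcases X.offdiag k j (Ne.symm hjk) with h0 | h0 <;> rw [h0] <;> nlinarith [hnn j]
  rw [X.diag] at h
  omega

lemma sub_mem {β : Fin n → ℤ} (hβ : β ∈ X.Pos) {k : Fin n}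
    (h : X.ip (esingle k) β = 1) : β - esingle k ∈ X.Pos := by
  have hnorm : X.ip (β - esingle k) (β - esingle k) = 2 := by
    simp only [ip_sub_left, ip_sub_right, ip_ee]
    simp only [ip_single_symm, X.diag, h, hβ.2.2]
    ring
  refine ⟨?_, fun j => ?_, hnorm⟩
  · intro h0
    rw [h0] at hnorm
    simp [ip] at hnorm
  · have hc := X.coord_pos hβ h
    have := hβ.2.1 j
    simp only [Pi.sub_apply, esingle_apply]
    rcases eq_or_ne j k with rfl | hjk
    · simp only [if_pos rfl]; omega
    · simp only [if_neg hjk]; omega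

lemma add_mem {β : Fin n → ℤ} (hβ : β ∈ X.Pos) {k : Fin n}
    (h : X.ip (esingle k) β = -1) : β + esingle k ∈ X.Pos := by
  have hnorm : X.ip (β + esingle k) (β + esingle k) = 2 := by
    simp only [ip_add_left, ip_add_right, ip_ee]
    simp only [ip_single_symm, X.diag, h, hβ.2.2]
    ring
  refine ⟨?_, fun j => ?_, hnorm⟩
  · intro h0
    rw [h0] at hnorm
    simp [ip] at hnorm
  · have := hβ.2.1 j
    simp only [Pi.add_apply, esingle_apply]
    split <;> omega

lemma eq_sum_of_pairs {β : Fin n → ℤ} (hβ : β ∈ X.Pos) {k l : Fin n}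
    (hkl : X.ip (esingle k) (esingle l) = -1)
    (hk : X.ip (esingle k) β = 1) (hl : X.ip (esingle l) β = 1) :
    β = esingle k + esingle l := by
  have hz : X.ip (β - (esingle k + esingle l)) (β - (esingle k + esingle l)) = 0 := by
    simp only [ip_sub_left, ip_sub_right, ip_add_left, ip_add_right, ip_ee]
    have hlk : X.C l k = X.C k l := X.symm l k
    have hkl' : X.C k l = -1 := by rw [← ip_ee]; exact hkl
    simp only [ip_single_symm, X.diag, hk, hl, hβ.2.2, hlk, hkl']
    ring
  have h0 := X.eq_zero_of_ip_self_eq_zero hz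
  rw [sub_eq_zero] at h0
  exact h0

lemma not_both_neg {β : Fin n → ℤ} (hβ : β ∈ X.Pos) {k l : Fin n}
    (hkl : X.ip (esingle k) (esingle l) = -1)
    (hk : X.ip (esingle k) β = -1) (hl : X.ip (esingle l) β = -1) : False := by
  have hz : X.ip (β + (esingle k + esingle l)) (β + (esingle k + esingle l)) = 0 := by
    simp only [ip_add_left, ip_add_right, ip_ee]
    have hlk : X.C l k = X.C k l := X.symm l k
    have hkl' : X.C k l = -1 := by rw [← ip_ee]; exact hkl
    simp only [ip_single_symm, X.diag, hk, hl, hβ.2.2, hlk, hkl']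
    ring
  have h0 := X.eq_zero_of_ip_self_eq_zero hz
  have hk0 := congrFun h0 k
  have h1 := hβ.2.1 k
  simp only [Pi.add_apply, Pi.zero_apply, esingle_self, esingle_apply] at hk0
  split at hk0 <;> omega

end ADE

namespace ADE
open scoped Classical

variable {n : ℕ} (X : ADE n) (A : Type) [CommRing A] (r : A) (k : Fin n)

lemma tau_single (b : PosIdx X) :
    tau X A r k (Finsupp.single b 1) =
      (if X.ip (esingle k) b.1 = 2 then 0
      else if X.ip (esingle k) b.1 = 1 then
        (if h : b.1 - esingle k ∈ X.Pos then r • Finsupp.single ⟨b.1 - esingle k, h⟩ 1 else 0)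
      else if X.ip (esingle k) b.1 = 0 then Finsupp.single b 1
      else (1 - r ^ 2) • Finsupp.single b 1 +
        (if h : b.1 + esingle k ∈ X.Pos then r • Finsupp.single ⟨b.1 + esingle k, h⟩ 1 else 0)) := by
  classical
  simp only [tau, Finsupp.linearCombination_single, one_smul]

lemma tau_two {b : PosIdx X} (hb : X.ip (esingle k) b.1 = 2) :
    tau X A r k (Finsupp.single b 1) = 0 := by
  rw [tau_single, if_pos hb]

lemma tau_one {b : PosIdx X} (hb : X.ip (esingle k) b.1 = 1) (c : PosIdx X)
    (hc : b.1 - esingle k = c.1) :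
    tau X A r k (Finsupp.single b 1) = r • Finsupp.single c 1 := by
  rw [tau_single, if_neg (by rw [hb]; norm_num), if_pos hb, dif_pos (hc ▸ c.2)]
  have he : (⟨b.1 - esingle k, hc ▸ c.2⟩ : PosIdx X) = c := Subtype.ext hc
  rw [he]

lemma tau_zero {b : PosIdx X} (hb : X.ip (esingle k) b.1 = 0) :
    tau X A r k (Finsupp.single b 1) = Finsupp.single b 1 := by
  rw [tau_single, if_neg (by rw [hb]; norm_num), if_neg (by rw [hb]; norm_num), if_pos hb]

lemma tau_neg {b : PosIdx X} (hb : X.ip (esingle k) b.1 = -1) (c : PosIdx X)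
    (hc : b.1 + esingle k = c.1) :
    tau X A r k (Finsupp.single b 1) =
      (1 - r ^ 2) • Finsupp.single b 1 + r • Finsupp.single c 1 := by
  rw [tau_single, if_neg (by rw [hb]; norm_num), if_neg (by rw [hb]; norm_num),
    if_neg (by rw [hb]; norm_num), dif_pos (hc ▸ c.2)]
  have he : (⟨b.1 + esingle k, hc ▸ c.2⟩ : PosIdx X) = c := Subtype.ext hc
  rw [he]

end ADE

namespace ADE

variable {n : ℕ} (X : ADE n) (A : Type) [CommRing A] (r : A)

section Cases

variable {k l : Fin n} (b : PosIdx X)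

/-- Case `(α_k,β) = 2`, i.e. `β = α_k` (then `(α_l,β) = -1`). -/
lemma braid_case_two (hkl : X.ip (esingle k) (esingle l) = -1) (hbk : b.1 = esingle k) :
    tau X A r k (tau X A r l (tau X A r k (Finsupp.single b 1))) =
    tau X A r l (tau X A r k (tau X A r l (Finsupp.single b 1))) := by
  have hlk : X.ip (esingle l) (esingle k) = -1 := by rw [X.ip_symm]; exact hkl
  have hk : X.ip (esingle k) b.1 = 2 := by rw [hbk, ip_ee, X.diag]
  have hl : X.ip (esingle l) b.1 = -1 := by rw [hbk]; exact hlk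
  have hkk : X.ip (esingle k) (esingle k) = 2 := by rw [ip_ee, X.diag]
  have hll : X.ip (esingle l) (esingle l) = 2 := by rw [ip_ee, X.diag]
  set c1 : PosIdx X := ⟨b.1 + esingle l, X.add_mem b.2 hl⟩ with hc1
  have p1 : X.ip (esingle k) c1.1 = 1 := by
    show X.ip (esingle k) (b.1 + esingle l) = 1
    rw [ip_add_right, hk, hkl]; ring
  set c2 : PosIdx X := ⟨c1.1 - esingle k, X.sub_mem c1.2 p1⟩ with hc2
  have p2 : X.ip (esingle l) c2.1 = 2 := by
    show X.ip (esingle l) (b.1 + esingle l - esingle k) = 2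
    rw [ip_sub_right, ip_add_right, hl, hll, hlk]; ring
  simp only [map_add, map_smul, tau_two X A r k hk, tau_neg X A r l hl c1 rfl,
    tau_one X A r k p1 c2 rfl, tau_two X A r l p2, map_zero, smul_zero, zero_add, add_zero]

/-- Case `(α_k,β) = 1`, `(α_l,β) = 1`, i.e. `β = α_k + α_l`. -/
lemma braid_case_one_one (hkl : X.ip (esingle k) (esingle l) = -1)
    (hk : X.ip (esingle k) b.1 = 1) (hl : X.ip (esingle l) b.1 = 1) :
    tau X A r k (tau X A r l (tau X A r k (Finsupp.single b 1))) =
    tau X A r l (tau X A r k (tau X A r l (Finsupp.single b 1))) := by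
  have hlk : X.ip (esingle l) (esingle k) = -1 := by rw [X.ip_symm]; exact hkl
  set c1 : PosIdx X := ⟨b.1 - esingle k, X.sub_mem b.2 hk⟩ with hc1
  set c2 : PosIdx X := ⟨b.1 - esingle l, X.sub_mem b.2 hl⟩ with hc2
  have p1 : X.ip (esingle l) c1.1 = 2 := by
    show X.ip (esingle l) (b.1 - esingle k) = 2
    rw [ip_sub_right, hl, hlk]; ring
  have p2 : X.ip (esingle k) c2.1 = 2 := by
    show X.ip (esingle k) (b.1 - esingle l) = 2
    rw [ip_sub_right, hk, hkl]; ring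
  simp only [map_add, map_smul, tau_one X A r k hk c1 rfl, tau_one X A r l hl c2 rfl,
    tau_two X A r l p1, tau_two X A r k p2, map_zero, smul_zero]

/-- Case `(α_k,β) = 1`, `(α_l,β) = 0`. -/
lemma braid_case_one_zero (hkl : X.ip (esingle k) (esingle l) = -1)
    (hk : X.ip (esingle k) b.1 = 1) (hl : X.ip (esingle l) b.1 = 0) :
    tau X A r k (tau X A r l (tau X A r k (Finsupp.single b 1))) =
    tau X A r l (tau X A r k (tau X A r l (Finsupp.single b 1))) := by
  have hlk : X.ip (esingle l) (esingle k) = -1 := by rw [X.ip_symm]; exact hkl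
  have hkk : X.ip (esingle k) (esingle k) = 2 := by rw [ip_ee, X.diag]
  set c1 : PosIdx X := ⟨b.1 - esingle k, X.sub_mem b.2 hk⟩ with hc1
  have p1 : X.ip (esingle l) c1.1 = 1 := by
    show X.ip (esingle l) (b.1 - esingle k) = 1
    rw [ip_sub_right, hl, hlk]; ring
  set c2 : PosIdx X := ⟨c1.1 - esingle l, X.sub_mem c1.2 p1⟩ with hc2
  have p2 : X.ip (esingle k) c2.1 = 0 := by
    show X.ip (esingle k) (b.1 - esingle k - esingle l) = 0
    rw [ip_sub_right, ip_sub_right, hk, hkk, hkl]; ring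
  simp only [map_add, map_smul, tau_zero X A r l hl, tau_one X A r k hk c1 rfl,
    tau_one X A r l p1 c2 rfl, tau_zero X A r k p2]

/-- Case `(α_k,β) = 1`, `(α_l,β) = -1`. -/
lemma braid_case_one_neg (hkl : X.ip (esingle k) (esingle l) = -1)
    (hk : X.ip (esingle k) b.1 = 1) (hl : X.ip (esingle l) b.1 = -1) :
    tau X A r k (tau X A r l (tau X A r k (Finsupp.single b 1))) =
    tau X A r l (tau X A r k (tau X A r l (Finsupp.single b 1))) := by
  have hlk : X.ip (esingle l) (esingle k) = -1 := by rw [X.ip_symm]; exact hkl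
  have hll : X.ip (esingle l) (esingle l) = 2 := by rw [ip_ee, X.diag]
  have hkk : X.ip (esingle k) (esingle k) = 2 := by rw [ip_ee, X.diag]
  set c1 : PosIdx X := ⟨b.1 - esingle k, X.sub_mem b.2 hk⟩ with hc1
  set c2 : PosIdx X := ⟨b.1 + esingle l, X.add_mem b.2 hl⟩ with hc2
  have p1 : X.ip (esingle l) c1.1 = 0 := by
    show X.ip (esingle l) (b.1 - esingle k) = 0
    rw [ip_sub_right, hl, hlk]; ring
  have p2 : X.ip (esingle k) c1.1 = -1 := by
    show X.ip (esingle k) (b.1 - esingle k) = -1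
    rw [ip_sub_right, hk, hkk]; ring
  have p3 : X.ip (esingle k) c2.1 = 0 := by
    show X.ip (esingle k) (b.1 + esingle l) = 0
    rw [ip_add_right, hk, hkl]; ring
  have p4 : X.ip (esingle l) c2.1 = 1 := by
    show X.ip (esingle l) (b.1 + esingle l) = 1
    rw [ip_add_right, hl, hll]; ring
  have e1 : c1.1 + esingle k = b.1 := by show b.1 - esingle k + esingle k = b.1; abel
  have e2 : c2.1 - esingle l = b.1 := by show b.1 + esingle l - esingle l = b.1; abel
  simp only [map_add, map_smul, tau_one X A r k hk c1 rfl, tau_zero X A r l p1,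
    tau_neg X A r k p2 b e1, tau_neg X A r l hl c2 rfl, tau_zero X A r k p3,
    tau_one X A r l p4 b e2]
  module

/-- Case `(α_k,β) = 0`, `(α_l,β) = 0`. -/
lemma braid_case_zero_zero (hk : X.ip (esingle k) b.1 = 0) (hl : X.ip (esingle l) b.1 = 0) :
    tau X A r k (tau X A r l (tau X A r k (Finsupp.single b 1))) =
    tau X A r l (tau X A r k (tau X A r l (Finsupp.single b 1))) := by
  simp only [tau_zero X A r k hk, tau_zero X A r l hl]

/-- Case `(α_k,β) = 0`, `(α_l,β) = -1`. -/
lemma braid_case_zero_neg (hkl : X.ip (esingle k) (esingle l) = -1)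
    (hk : X.ip (esingle k) b.1 = 0) (hl : X.ip (esingle l) b.1 = -1) :
    tau X A r k (tau X A r l (tau X A r k (Finsupp.single b 1))) =
    tau X A r l (tau X A r k (tau X A r l (Finsupp.single b 1))) := by
  have hlk : X.ip (esingle l) (esingle k) = -1 := by rw [X.ip_symm]; exact hkl
  have hll : X.ip (esingle l) (esingle l) = 2 := by rw [ip_ee, X.diag]
  set c1 : PosIdx X := ⟨b.1 + esingle l, X.add_mem b.2 hl⟩ with hc1
  have p1 : X.ip (esingle k) c1.1 = -1 := by
    show X.ip (esingle k) (b.1 + esingle l) = -1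
    rw [ip_add_right, hk, hkl]; ring
  set c2 : PosIdx X := ⟨c1.1 + esingle k, X.add_mem c1.2 p1⟩ with hc2
  have p2 : X.ip (esingle l) c1.1 = 1 := by
    show X.ip (esingle l) (b.1 + esingle l) = 1
    rw [ip_add_right, hl, hll]; ring
  have p3 : X.ip (esingle l) c2.1 = 0 := by
    show X.ip (esingle l) (b.1 + esingle l + esingle k) = 0
    rw [ip_add_right, ip_add_right, hl, hll, hlk]; ring
  have e1 : c1.1 - esingle l = b.1 := by show b.1 + esingle l - esingle l = b.1; abel
  simp only [map_add, map_smul, tau_zero X A r k hk, tau_neg X A r l hl c1 rfl,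
    tau_neg X A r k p1 c2 rfl, tau_one X A r l p2 b e1, tau_zero X A r l p3]
  module

end Cases

end ADE

/-- For adjacent `k, l` (i.e. `(α_k, α_l) = -1`), the maps `τ_k, τ_l` on the free
`ℤ[r]`-module `V₀` with basis `{x_β : β ∈ Φ⁺}` satisfy the braid relation
`τ_k τ_l τ_k = τ_l τ_k τ_l`. -/
theorem tau_braid {n : ℕ} (X : ADE n) (k l : Fin n)
    (h : X.ip (esingle k) (esingle l) = -1) :
    (ADE.tau X (Polynomial ℤ) Polynomial.X k) ∘ₗ (ADE.tau X (Polynomial ℤ) Polynomial.X l) ∘ₗ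
        (ADE.tau X (Polynomial ℤ) Polynomial.X k) =
      (ADE.tau X (Polynomial ℤ) Polynomial.X l) ∘ₗ (ADE.tau X (Polynomial ℤ) Polynomial.X k) ∘ₗ
        (ADE.tau X (Polynomial ℤ) Polynomial.X l) := by
  have hlk : X.ip (esingle l) (esingle k) = -1 := by rw [X.ip_symm]; exact h
  refine Finsupp.lhom_ext fun b m => ?_
  have hsm : (Finsupp.single b m : ADE.LKMod X (Polynomial ℤ)) = m • Finsupp.single b 1 := by
    rw [Finsupp.smul_single, smul_eq_mul, mul_one]
  rw [hsm, map_smul, map_smul]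
  congr 1
  simp only [LinearMap.comp_apply]
  rcases X.pairing_cases b.2 k with hk | hk | hk | ⟨hk, hbk⟩ <;>
    rcases X.pairing_cases b.2 l with hl | hl | hl | ⟨hl, hbl⟩
  · exact absurd (X.not_both_neg b.2 h hk hl) not_false
  · exact (X.braid_case_zero_neg (Polynomial ℤ) Polynomial.X b hlk hl hk).symm
  · exact (X.braid_case_one_neg (Polynomial ℤ) Polynomial.X b hlk hl hk).symm
  · exact (X.braid_case_two (Polynomial ℤ) Polynomial.X b hlk hbl).symm
  · exact X.braid_case_zero_neg (Polynomial ℤ) Polynomial.X b h hk hl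
  · exact X.braid_case_zero_zero (Polynomial ℤ) Polynomial.X b hk hl
  · exact (X.braid_case_one_zero (Polynomial ℤ) Polynomial.X b hlk hl hk).symm
  · rw [hbl] at hk; omega
  · exact X.braid_case_one_neg (Polynomial ℤ) Polynomial.X b h hk hl
  · exact X.braid_case_one_zero (Polynomial ℤ) Polynomial.X b h hk hl
  · exact X.braid_case_one_one (Polynomial ℤ) Polynomial.X b h hk hl
  · rw [hbl] at hk; omega
  · exact X.braid_case_two (Polynomial ℤ) Polynomial.X b h hbk
  · rw [hbk] at hl; omega
  · rw [hbk] at hl; omega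
  · rw [hbk] at hl; omega
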